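/- Let b ≥ 10 and γ ∈ (1,2), and let m ≥ 0 be an integer. There exist constants A₀ = A₀(b,γ,m) ≥ 2, C_m = C(b,γ,m) > 0 and C = C(b,γ) > 0 such that for every real A ≥ A₀, defining M_k = ⌊A^{b^k}⌋ and N_k = M_k ⌊M_k^{γ−1}⌋ for k ∈ ℕ, the following hold: (i) for all t > 0, Σ_{k≥0} N_k^{1+m} exp(−N_k² t) ≤ C_m t^{−(m+1)/2} exp(−N₀² t / C_m); and (ii) for all 0 < t₁ ≤ t₂ ≤ 1, ∫_{t₁}^{t₂} (Σ_{k≥0} N_k exp(−N_k² t))² dt + ∫_{t₁}^{t₂} t^{−1/2} Σ_{k≥0} N_k exp(−N_k² t) dt ≤ C (1 + (log A)^{−1} log(t₂/t₁)). -/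

import Mathlib

/-!
The frequencies are lacunary, `A N_k ≤ N_{k+1}`. For a doubling sequence `y_k` one has
`∑ min (y_k, y_k⁻¹) ≤ 4`: the terms below `1` and the inverses of the terms above `1` are
dominated by geometric series. Since `y^p e^{-y²} ≤ (p+1)! min (y, y⁻¹)`, heat scaling
`y_k = N_k √t` gives `∑ N_k^p e^{-N_k² t} ≤ 4 (p+1)! t^{-p/2}`, and spending half of the Gaussian
on `e^{-N_0² t / 2}` gives (i).

For (ii), the interval integral `N ∫_{t₁}^{t₂} t^{-1/2} e^{-N² t} dt` is at most `2 N √t₂`,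
at most `(N √t₁)⁻¹`, and always at most `3`. The first two bounds sum to `O(1)` over the
frequencies with `N √t₂ ≤ 1` or `N √t₁ ≥ 1`, and by lacunarity at most
`1 + log (t₂/t₁) / log A` frequencies lie strictly between. The `L²` term is reduced to the
weighted one by the pointwise bound `∑ N_k e^{-N_k² t} ≤ 8 t^{-1/2}` of the first part.
-/

open Real Set Finset MeasureTheory intervalIntegral
open scoped Nat

section Lacunary

variable {y : ℕ → ℝ}

lemma pow_mul_le_of_lacunary {A : ℝ} (hA : 0 ≤ A) (h : ∀ k, A * y k ≤ y (k + 1)) (j i : ℕ) :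
    A ^ i * y j ≤ y (j + i) := by
  induction i with
  | zero => simp
  | succ i ih =>
    calc A ^ (i + 1) * y j = A * (A ^ i * y j) := by ring
      _ ≤ A * y (j + i) := mul_le_mul_of_nonneg_left ih hA
      _ ≤ y (j + i + 1) := h _

lemma two_mul_le_of_lacunary {A : ℝ} (hy : ∀ k, 0 ≤ y k) (hA : 2 ≤ A)
    (h : ∀ k, A * y k ≤ y (k + 1)) (k : ℕ) : 2 * y k ≤ y (k + 1) :=
  (mul_le_mul_of_nonneg_right hA (hy k)).trans (h k)

lemma sum_range_succ_le_two_mul_of_doubling (hy : ∀ k, 0 < y k) (h2 : ∀ k, 2 * y k ≤ y (k + 1))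
    (n : ℕ) : ∑ k ∈ range (n + 1), y k ≤ 2 * y n := by
  induction n with
  | zero => rw [zero_add, sum_range_one]; linarith [hy 0]
  | succ n ih =>
    rw [sum_range_succ]
    linarith [h2 n]

lemma sum_Ico_inv_le_two_mul_inv_of_doubling (hy : ∀ k, 0 < y k) (h2 : ∀ k, 2 * y k ≤ y (k + 1))
    (j n : ℕ) :
    ∑ k ∈ Ico j n, (y k)⁻¹ ≤ 2 * (y j)⁻¹ := by
  suffices ∀ n, j ≤ n → ∑ k ∈ Ico j n, (y k)⁻¹ + 2 * (y n)⁻¹ ≤ 2 * (y j)⁻¹ by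
    rcases le_total j n with hjn | hnj
    · linarith [this n hjn, inv_pos.2 (hy n)]
    · rw [Finset.Ico_eq_empty_of_le hnj, sum_empty]
      exact mul_nonneg zero_le_two (inv_pos.2 (hy j)).le
  intro n hjn
  induction n, hjn using Nat.le_induction with
  | base => simp
  | succ n hjn ih =>
    have : 2 * (y (n + 1))⁻¹ ≤ (y n)⁻¹ := by
      rw [← div_eq_mul_inv, div_le_iff₀ (hy _), inv_mul_eq_div, le_div_iff₀ (hy _)]
      linarith [h2 n]
    rw [sum_Ico_succ_top hjn]
    linarith

lemma sum_range_min_inv_le_four_of_doubling (hy : ∀ k, 0 < y k) (h2 : ∀ k, 2 * y k ≤ y (k + 1))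
    (n : ℕ) : ∑ k ∈ range n, min (y k) (y k)⁻¹ ≤ 4 := by
  classical
  have hunbdd : ∃ k, 1 ≤ y k := by
    obtain ⟨i, hi⟩ := pow_unbounded_of_one_lt (y 0)⁻¹ one_lt_two
    refine ⟨i, ?_⟩
    have := pow_mul_le_of_lacunary zero_le_two h2 0 i
    rw [zero_add] at this
    nlinarith [inv_mul_cancel₀ (hy 0).ne', hy 0]
  set K := Nat.find hunbdd
  have hsmall : ∑ k ∈ range K, y k ≤ 2 := by
    rcases K.eq_zero_or_pos with hK | hK
    · simp [hK]
    · have hlast : y (K - 1) < 1 := not_le.1 (Nat.find_min hunbdd (Nat.sub_lt hK one_pos))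
      have := sum_range_succ_le_two_mul_of_doubling hy h2 (K - 1)
      rw [Nat.sub_add_cancel hK] at this
      linarith
  have hlarge : ∑ k ∈ Ico K (max n K), (y k)⁻¹ ≤ 2 := by
    have := sum_Ico_inv_le_two_mul_inv_of_doubling hy h2 K (max n K)
    have := inv_le_one_of_one_le₀ (Nat.find_spec hunbdd)
    linarith
  calc ∑ k ∈ range n, min (y k) (y k)⁻¹ ≤ ∑ k ∈ range (max n K), min (y k) (y k)⁻¹ :=
        sum_le_sum_of_subset_of_nonneg (range_subset_range.2 (le_max_left _ _))
          fun k _ _ ↦ le_min (hy k).le (inv_pos.2 (hy k)).le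
    _ = ∑ k ∈ range K, min (y k) (y k)⁻¹ + ∑ k ∈ Ico K (max n K), min (y k) (y k)⁻¹ :=
        (sum_range_add_sum_Ico _ (le_max_right _ _)).symm
    _ ≤ ∑ k ∈ range K, y k + ∑ k ∈ Ico K (max n K), (y k)⁻¹ :=
        add_le_add (sum_le_sum fun k _ ↦ min_le_left _ _) (sum_le_sum fun k _ ↦ min_le_right _ _)
    _ ≤ 4 := by linarith

lemma card_filter_lt_one_lt_le_of_lacunary {ν : ℕ → ℝ} {A a b : ℝ} (hA : 1 < A)
    (hν : ∀ k, 0 < ν k) (h : ∀ k, A * ν k ≤ ν (k + 1)) (ha : 0 < a) (hab : a ≤ b)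
    (s : Finset ℕ) :
    (#{k ∈ s | ν k * a < 1 ∧ 1 < ν k * b} : ℝ) ≤ 1 + log (b / a) / log A := by
  set F := {k ∈ s | ν k * a < 1 ∧ 1 < ν k * b}
  have hlogA : 0 < log A := log_pos hA
  have hlog : 0 ≤ log (b / a) / log A :=
    div_nonneg (log_nonneg ((one_le_div ha).2 hab)) hlogA.le
  rcases F.eq_empty_or_nonempty with hF | hF
  · rw [hF, Finset.card_empty, Nat.cast_zero]; linarith
  set i := F.min' hF
  set j := F.max' hF
  have hi : 1 < ν i * b := (mem_filter.1 (F.min'_mem hF)).2.2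
  have hj : ν j * a < 1 := (mem_filter.1 (F.max'_mem hF)).2.1
  have hij : i ≤ j := F.min'_le_max' hF
  have hpow : A ^ (j - i) < b / a := by
    have := pow_mul_le_of_lacunary (by linarith) h i (j - i)
    rw [Nat.add_sub_cancel' hij] at this
    rw [lt_div_iff₀ ha]
    nlinarith [hν i, pow_pos (zero_lt_one.trans hA) (j - i)]
  have hgap : ((j - i : ℕ) : ℝ) ≤ log (b / a) / log A := by
    rw [le_div_iff₀ hlogA, ← log_pow]
    exact (log_lt_log (pow_pos (zero_lt_one.trans hA) _) hpow).le
  have hcard : #F ≤ j - i + 1 := by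
    calc #F ≤ #(Icc i j) := card_le_card fun k hk ↦ mem_Icc.2 ⟨F.min'_le k hk, F.le_max' k hk⟩
      _ = j - i + 1 := by rw [Nat.card_Icc]; omega
  calc (#F : ℝ) ≤ ((j - i : ℕ) : ℝ) + 1 := by exact_mod_cast hcard
    _ ≤ 1 + log (b / a) / log A := by linarith

end Lacunary

lemma rpow_neg_div_two_eq_inv_sqrt_pow {s : ℝ} (hs : 0 ≤ s) (p : ℕ) :
    s ^ (-(p : ℝ) / 2) = ((√s) ^ p)⁻¹ := by
  rw [sqrt_eq_rpow, ← rpow_natCast, ← rpow_mul hs, ← rpow_neg hs]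
  ring_nf

lemma pow_mul_exp_neg_sq_le_factorial_mul_min {p : ℕ} (hp : 1 ≤ p) {x : ℝ} (hx : 0 < x) :
    x ^ p * exp (-x ^ 2) ≤ (p + 1)! * min x x⁻¹ := by
  have hfac : (1 : ℝ) ≤ (p + 1)! := by exact_mod_cast (p + 1).factorial_pos
  have hexp : exp (-x ^ 2) ≤ 1 := exp_le_one_iff.2 (by nlinarith)
  rcases le_total x 1 with hx1 | hx1
  · rw [min_eq_left (hx1.trans ((one_le_inv₀ hx).2 hx1))]
    calc x ^ p * exp (-x ^ 2) ≤ x * 1 :=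
          mul_le_mul (pow_le_of_le_one hx.le hx1 (by omega)) hexp (exp_pos _).le hx.le
      _ ≤ (p + 1)! * x := by nlinarith
  · rw [min_eq_right ((inv_le_one_of_one_le₀ hx1).trans hx1), ← div_eq_mul_inv, le_div_iff₀ hx]
    have hpow : x ^ (p + 1) ≤ (p + 1)! * exp x := by
      have := pow_div_factorial_le_exp x hx.le (p + 1)
      rwa [div_le_iff₀ (by positivity), mul_comm] at this
    have hgauss : exp x * exp (-x ^ 2) ≤ 1 := by
      rw [← exp_add, exp_le_one_iff]; nlinarith
    calc x ^ p * exp (-x ^ 2) * x = x ^ (p + 1) * exp (-x ^ 2) := by ring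
      _ ≤ (p + 1)! * exp x * exp (-x ^ 2) := mul_le_mul_of_nonneg_right hpow (exp_pos _).le
      _ ≤ (p + 1)! := by rw [mul_assoc]; nlinarith [(exp_pos x).le]

lemma rpow_neg_half_eq_inv_sqrt {s : ℝ} (hs : 0 ≤ s) : s ^ (-(1 : ℝ) / 2) = (√s)⁻¹ := by
  simpa using rpow_neg_div_two_eq_inv_sqrt_pow hs 1

lemma intervalIntegrable_rpow_neg_half_mul {f : ℝ → ℝ} {a b : ℝ} (hf : ContinuousOn f (uIcc a b)) :
    IntervalIntegrable (fun t ↦ t ^ (-(1 : ℝ) / 2) * f t) volume a b :=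
  (intervalIntegrable_rpow' (by norm_num)).mul_continuousOn hf

lemma integral_rpow_neg_half (a b : ℝ) :
    ∫ t in a..b, t ^ (-(1 : ℝ) / 2) = 2 * (√b - √a) := by
  rw [integral_rpow (Or.inl (by norm_num)), sqrt_eq_rpow, sqrt_eq_rpow]
  norm_num
  ring

lemma integral_rpow_neg_half_mul_exp_le_two_sqrt {c a b : ℝ} (hc : 0 ≤ c) (ha : 0 ≤ a)
    (hab : a ≤ b) : ∫ t in a..b, t ^ (-(1 : ℝ) / 2) * exp (-c * t) ≤ 2 * √b := by
  calc ∫ t in a..b, t ^ (-(1 : ℝ) / 2) * exp (-c * t) ≤ ∫ t in a..b, t ^ (-(1 : ℝ) / 2) := by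
        refine integral_mono_on hab
          (intervalIntegrable_rpow_neg_half_mul (by fun_prop))
          (intervalIntegrable_rpow' (by norm_num))
          fun t ht ↦ mul_le_of_le_one_right (rpow_nonneg (ha.trans ht.1) _) ?_
        exact exp_le_one_iff.2 (by nlinarith [ha.trans ht.1])
    _ = 2 * (√b - √a) := integral_rpow_neg_half a b
    _ ≤ 2 * √b := by linarith [sqrt_nonneg a]

lemma integral_exp_neg_mul_le_inv_mul {c : ℝ} (hc : 0 < c) (a b : ℝ) :
    ∫ t in a..b, exp (-c * t) ≤ c⁻¹ * exp (-c * a) := by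
  rw [integral_comp_mul_left (fun t ↦ exp t) (neg_ne_zero.2 hc.ne'), integral_exp, smul_eq_mul,
    inv_neg, neg_mul, ← mul_neg, neg_sub]
  exact mul_le_mul_of_nonneg_left (by linarith [exp_pos (-c * b)]) (inv_pos.2 hc).le

lemma integral_rpow_neg_half_mul_exp_le_inv {c a b : ℝ} (hc : 0 < c) (ha : 0 < a) (hab : a ≤ b) :
    ∫ t in a..b, t ^ (-(1 : ℝ) / 2) * exp (-c * t) ≤ (c * √a)⁻¹ := by
  calc ∫ t in a..b, t ^ (-(1 : ℝ) / 2) * exp (-c * t)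
      ≤ ∫ t in a..b, (√a)⁻¹ * exp (-c * t) := by
        refine integral_mono_on hab
          (intervalIntegrable_rpow_neg_half_mul (by fun_prop))
          (Continuous.intervalIntegrable (by fun_prop) _ _)
          fun t ht ↦ mul_le_mul_of_nonneg_right ?_ (exp_pos _).le
        rw [← rpow_neg_half_eq_inv_sqrt ha.le]
        exact rpow_le_rpow_of_nonpos ha ht.1 (by norm_num)
    _ = (√a)⁻¹ * ∫ t in a..b, exp (-c * t) := integral_const_mul _ _
    _ ≤ (√a)⁻¹ * c⁻¹ := by
        gcongr
        exact (integral_exp_neg_mul_le_inv_mul hc a b).trans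
          (mul_le_of_le_one_right (inv_pos.2 hc).le (exp_le_one_iff.2 (by nlinarith)))
    _ = (c * √a)⁻¹ := by rw [mul_inv, mul_comm]

lemma mul_integral_rpow_neg_half_mul_exp_le_three {ν a b : ℝ} (hν : 0 < ν) (ha : 0 < a)
    (hab : a ≤ b) : ν * ∫ t in a..b, t ^ (-(1 : ℝ) / 2) * exp (-ν ^ 2 * t) ≤ 3 := by
  set u := (ν ^ 2)⁻¹
  have hu : 0 < u := by positivity
  have hsu : √u = ν⁻¹ := by rw [sqrt_inv, sqrt_sq hν.le]
  have hint : ∀ c d : ℝ,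
      IntervalIntegrable (fun t ↦ t ^ (-(1 : ℝ) / 2) * exp (-ν ^ 2 * t)) volume c d :=
    fun c d ↦ intervalIntegrable_rpow_neg_half_mul (by fun_prop)
  -- enlarge `[a, b]` to contain the heat time scale `u = ν⁻²`, and split there
  have hpos : 0 < min a u := lt_min ha hu
  have henlarge : ∫ t in a..b, t ^ (-(1 : ℝ) / 2) * exp (-ν ^ 2 * t)
      ≤ ∫ t in min a u..max b u, t ^ (-(1 : ℝ) / 2) * exp (-ν ^ 2 * t) := by
    refine integral_mono_interval (min_le_left _ _) hab (le_max_left _ _) ?_ (hint _ _)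
    refine ae_restrict_of_forall_mem measurableSet_Ioc fun t ht ↦ ?_
    exact mul_nonneg (rpow_nonneg (hpos.trans ht.1).le _) (exp_pos _).le
  rw [← integral_add_adjacent_intervals (hint (min a u) u) (hint u (max b u))] at henlarge
  have hsmall := integral_rpow_neg_half_mul_exp_le_two_sqrt (sq_nonneg ν) hpos.le (min_le_right a u)
  have hlarge := integral_rpow_neg_half_mul_exp_le_inv (pow_pos hν 2) hu (le_max_right b u)
  calc ν * ∫ t in a..b, t ^ (-(1 : ℝ) / 2) * exp (-ν ^ 2 * t)
      ≤ ν * (2 * √u + (ν ^ 2 * √u)⁻¹) := by gcongr; linarith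
    _ = 3 := by rw [hsu]; field_simp; ring

lemma mul_integral_rpow_neg_half_mul_exp_le {ν a b : ℝ} (hν : 0 < ν) (ha : 0 < a) (hab : a ≤ b) :
    ν * ∫ t in a..b, t ^ (-(1 : ℝ) / 2) * exp (-ν ^ 2 * t) ≤
      2 * min (ν * √b) (ν * √b)⁻¹ + min (ν * √a) (ν * √a)⁻¹ +
        3 * if ν * √a < 1 ∧ 1 < ν * √b then 1 else 0 := by
  have hmin : ∀ x : ℝ, 0 < x → 0 ≤ min x x⁻¹ := fun x hx ↦ le_min hx.le (inv_pos.2 hx).le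
  have hy : 0 < ν * √b := mul_pos hν (sqrt_pos.2 (ha.trans_le hab))
  have hz : 0 < ν * √a := mul_pos hν (sqrt_pos.2 ha)
  have hind : (0 : ℝ) ≤ if ν * √a < 1 ∧ 1 < ν * √b then 1 else 0 := by split_ifs <;> norm_num
  by_cases hyb : ν * √b ≤ 1
  · rw [min_eq_left (hyb.trans ((one_le_inv₀ hy).2 hyb))]
    have := integral_rpow_neg_half_mul_exp_le_two_sqrt (sq_nonneg ν) ha.le hab
    nlinarith [hmin _ hz]
  by_cases hza : 1 ≤ ν * √a
  · rw [min_eq_right ((inv_le_one_of_one_le₀ hza).trans hza)]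
    have := integral_rpow_neg_half_mul_exp_le_inv (pow_pos hν 2) ha hab
    have : ν * (ν ^ 2 * √a)⁻¹ = (ν * √a)⁻¹ := by field_simp
    nlinarith [hmin _ hy]
  rw [if_pos ⟨not_le.1 hza, not_le.1 hyb⟩]
  linarith [mul_integral_rpow_neg_half_mul_exp_le_three hν ha hab, hmin _ hy, hmin _ hz]

section Series

variable {ν : ℕ → ℝ}

lemma sum_range_pow_mul_exp_neg_sq_mul_le (hν : ∀ k, 0 < ν k) (h2 : ∀ k, 2 * ν k ≤ ν (k + 1))
    {p : ℕ} (hp : 1 ≤ p) {s : ℝ} (hs : 0 < s) (n : ℕ) :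
    ∑ k ∈ range n, ν k ^ p * exp (-ν k ^ 2 * s) ≤ 4 * (p + 1)! * s ^ (-(p : ℝ) / 2) := by
  have hsq : 0 < √s := sqrt_pos.2 hs
  have hscale : ∀ k, ν k ^ p * exp (-ν k ^ 2 * s) =
      s ^ (-(p : ℝ) / 2) * ((ν k * √s) ^ p * exp (-(ν k * √s) ^ 2)) := by
    intro k
    rw [rpow_neg_div_two_eq_inv_sqrt_pow hs.le, mul_pow, mul_pow, sq_sqrt hs.le]
    field_simp
  simp_rw [hscale, ← mul_sum]
  rw [mul_comm]
  refine mul_le_mul_of_nonneg_right ?_ (rpow_nonneg hs.le _)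
  calc ∑ k ∈ range n, (ν k * √s) ^ p * exp (-(ν k * √s) ^ 2)
      ≤ ∑ k ∈ range n, (p + 1)! * min (ν k * √s) (ν k * √s)⁻¹ :=
        sum_le_sum fun k _ ↦ pow_mul_exp_neg_sq_le_factorial_mul_min hp (mul_pos (hν k) hsq)
    _ ≤ (p + 1)! * 4 := by
        rw [← mul_sum]
        exact mul_le_mul_of_nonneg_left
          (sum_range_min_inv_le_four_of_doubling (fun k ↦ mul_pos (hν k) hsq)
            (fun k ↦ by nlinarith [h2 k]) n) (by positivity)
    _ = 4 * (p + 1)! := mul_comm _ _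

lemma summable_pow_mul_exp_neg_sq_mul (hν : ∀ k, 0 < ν k) (h2 : ∀ k, 2 * ν k ≤ ν (k + 1))
    {p : ℕ} (hp : 1 ≤ p) {s : ℝ} (hs : 0 < s) :
    Summable fun k ↦ ν k ^ p * exp (-ν k ^ 2 * s) :=
  summable_of_sum_range_le (fun k ↦ mul_nonneg (pow_nonneg (hν k).le _) (exp_pos _).le)
    (sum_range_pow_mul_exp_neg_sq_mul_le hν h2 hp hs)

lemma tsum_pow_mul_exp_neg_sq_mul_le (hν : ∀ k, 0 < ν k) (h2 : ∀ k, 2 * ν k ≤ ν (k + 1))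
    {p : ℕ} (hp : 1 ≤ p) {s : ℝ} (hs : 0 < s) :
    ∑' k, ν k ^ p * exp (-ν k ^ 2 * s) ≤ 4 * (p + 1)! * s ^ (-(p : ℝ) / 2) :=
  Real.tsum_le_of_sum_range_le (fun k ↦ mul_nonneg (pow_nonneg (hν k).le _) (exp_pos _).le)
    (sum_range_pow_mul_exp_neg_sq_mul_le hν h2 hp hs)

lemma tsum_pow_mul_exp_neg_sq_mul_le_mul_exp (hν : ∀ k, 0 < ν k)
    (h2 : ∀ k, 2 * ν k ≤ ν (k + 1)) {p : ℕ} (hp : 1 ≤ p) {t : ℝ} (ht : 0 < t) :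
    ∑' k, ν k ^ p * exp (-ν k ^ 2 * t) ≤
      4 * (p + 1)! * 2 ^ p * t ^ (-(p : ℝ) / 2) * exp (-ν 0 ^ 2 * t / (4 * (p + 1)! * 2 ^ p)) := by
  set C : ℝ := 4 * (p + 1)! * 2 ^ p
  have hC : 2 ≤ C := by
    have : (1 : ℝ) ≤ (p + 1)! := by exact_mod_cast (p + 1).factorial_pos
    have : (1 : ℝ) ≤ 2 ^ p := one_le_pow₀ one_le_two
    nlinarith
  have hmono : Monotone ν := monotone_nat_of_le_succ fun k ↦ by linarith [h2 k, hν k]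
  -- half of the Gaussian factor is spent on the decay `exp (-ν₀² t / C)`
  have hsplit : ∀ k, ν k ^ p * exp (-ν k ^ 2 * t) ≤
      ν k ^ p * exp (-ν k ^ 2 * (t / 2)) * exp (-ν 0 ^ 2 * t / C) := by
    intro k
    rw [mul_assoc, ← exp_add]
    refine mul_le_mul_of_nonneg_left (exp_le_exp.2 ?_) (pow_nonneg (hν k).le _)
    have h0k : ν 0 ^ 2 ≤ ν k ^ 2 := pow_le_pow_left₀ (hν 0).le (hmono (Nat.zero_le k)) 2
    have : ν 0 ^ 2 * t / C ≤ ν 0 ^ 2 * t / 2 := div_le_div_of_nonneg_left (by positivity) two_pos hC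
    have : ν 0 ^ 2 * t / C ≤ ν k ^ 2 * t / 2 := this.trans (by gcongr)
    have : -ν 0 ^ 2 * t / C = -(ν 0 ^ 2 * t / C) := by ring
    linarith
  have hhalf : (t / 2) ^ (-(p : ℝ) / 2) ≤ 2 ^ p * t ^ (-(p : ℝ) / 2) := by
    rw [div_rpow ht.le zero_le_two, div_eq_mul_inv, ← rpow_neg zero_le_two, mul_comm]
    gcongr
    calc (2 : ℝ) ^ (-(-(p : ℝ) / 2)) ≤ 2 ^ (p : ℝ) :=
          rpow_le_rpow_of_exponent_le one_le_two (by linarith [p.cast_nonneg (α := ℝ)])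
      _ = 2 ^ p := rpow_natCast 2 p
  calc ∑' k, ν k ^ p * exp (-ν k ^ 2 * t)
      ≤ ∑' k, ν k ^ p * exp (-ν k ^ 2 * (t / 2)) * exp (-ν 0 ^ 2 * t / C) :=
        (summable_pow_mul_exp_neg_sq_mul hν h2 hp ht).tsum_le_tsum hsplit
          ((summable_pow_mul_exp_neg_sq_mul hν h2 hp (half_pos ht)).mul_right _)
    _ = (∑' k, ν k ^ p * exp (-ν k ^ 2 * (t / 2))) * exp (-ν 0 ^ 2 * t / C) := tsum_mul_right
    _ ≤ 4 * (p + 1)! * (2 ^ p * t ^ (-(p : ℝ) / 2)) * exp (-ν 0 ^ 2 * t / C) := by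
        gcongr
        exact (tsum_pow_mul_exp_neg_sq_mul_le hν h2 hp (half_pos ht)).trans
          (mul_le_mul_of_nonneg_left hhalf (by positivity))
    _ = C * t ^ (-(p : ℝ) / 2) * exp (-ν 0 ^ 2 * t / C) := by ring

lemma summable_mul_exp_neg_sq_mul (hν : ∀ k, 0 < ν k) (h2 : ∀ k, 2 * ν k ≤ ν (k + 1)) {s : ℝ}
    (hs : 0 < s) : Summable fun k ↦ ν k * exp (-ν k ^ 2 * s) := by
  simpa using summable_pow_mul_exp_neg_sq_mul hν h2 le_rfl hs

lemma continuousOn_tsum_mul_exp_neg_sq_mul (hν : ∀ k, 0 < ν k) (h2 : ∀ k, 2 * ν k ≤ ν (k + 1))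
    {a : ℝ} (ha : 0 < a) : ContinuousOn (fun t ↦ ∑' k, ν k * exp (-ν k ^ 2 * t)) (Ici a) := by
  refine continuousOn_tsum (fun k ↦ by fun_prop) (summable_mul_exp_neg_sq_mul hν h2 ha)
    fun k t ht ↦ ?_
  rw [norm_of_nonneg (mul_nonneg (hν k).le (exp_pos _).le)]
  exact mul_le_mul_of_nonneg_left (exp_le_exp.2 (by nlinarith [mem_Ici.1 ht, sq_nonneg (ν k)]))
    (hν k).le

lemma hasSum_integral_rpow_neg_half_mul_tsum (hν : ∀ k, 0 < ν k)
    (h2 : ∀ k, 2 * ν k ≤ ν (k + 1)) {a b : ℝ} (ha : 0 < a) (hab : a ≤ b) :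
    HasSum (fun k ↦ ν k * ∫ t in a..b, t ^ (-(1 : ℝ) / 2) * exp (-ν k ^ 2 * t))
      (∫ t in a..b, t ^ (-(1 : ℝ) / 2) * ∑' k, ν k * exp (-ν k ^ 2 * t)) := by
  have hbound : ∀ k, ∀ t ∈ uIoc a b,
      ‖t ^ (-(1 : ℝ) / 2) * (ν k * exp (-ν k ^ 2 * t))‖ ≤
        a ^ (-(1 : ℝ) / 2) * (ν k * exp (-ν k ^ 2 * a)) := by
    intro k t ht
    rw [uIoc_of_le hab] at ht
    have hat : a ≤ t := ht.1.le
    rw [norm_of_nonneg (mul_nonneg (rpow_nonneg (ha.trans_le hat).le _)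
      (mul_nonneg (hν k).le (exp_pos _).le))]
    refine mul_le_mul (rpow_le_rpow_of_nonpos ha hat (by norm_num)) ?_
      (mul_nonneg (hν k).le (exp_pos _).le) (rpow_nonneg ha.le _)
    exact mul_le_mul_of_nonneg_left (exp_le_exp.2 (by nlinarith [sq_nonneg (ν k)])) (hν k).le
  have hterm : ∀ k, ν k * ∫ t in a..b, t ^ (-(1 : ℝ) / 2) * exp (-ν k ^ 2 * t) =
      ∫ t in a..b, t ^ (-(1 : ℝ) / 2) * (ν k * exp (-ν k ^ 2 * t)) := fun k ↦ by
    rw [← intervalIntegral.integral_const_mul]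
    congr 1 with t
    ring
  simp_rw [hterm]
  exact hasSum_integral_of_dominated_convergence
    (fun k _ ↦ a ^ (-(1 : ℝ) / 2) * (ν k * exp (-ν k ^ 2 * a)))
    (fun k ↦ (intervalIntegrable_rpow_neg_half_mul (f := fun t ↦ ν k * exp (-ν k ^ 2 * t))
      (by fun_prop)).def'.aestronglyMeasurable)
    (fun k ↦ Filter.Eventually.of_forall (hbound k))
    (Filter.Eventually.of_forall fun _ _ ↦ (summable_mul_exp_neg_sq_mul hν h2 ha).mul_left _)
    intervalIntegrable_const
    (Filter.Eventually.of_forall fun t ht ↦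
      ((summable_mul_exp_neg_sq_mul hν h2 (ha.trans_le (uIoc_of_le hab ▸ ht).1.le)).hasSum).mul_left
        (t ^ (-(1 : ℝ) / 2)))

lemma integral_rpow_neg_half_mul_tsum_le (hν : ∀ k, 0 < ν k) {A : ℝ} (hA : 2 ≤ A)
    (h : ∀ k, A * ν k ≤ ν (k + 1)) {a b : ℝ} (ha : 0 < a) (hab : a ≤ b) :
    ∫ t in a..b, t ^ (-(1 : ℝ) / 2) * ∑' k, ν k * exp (-ν k ^ 2 * t) ≤
      15 * (1 + (log A)⁻¹ * log (b / a)) := by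
  classical
  have h2 := two_mul_le_of_lacunary (fun k ↦ (hν k).le) hA h
  have hsa : 0 < √a := sqrt_pos.2 ha
  have hsb : 0 < √b := sqrt_pos.2 (ha.trans_le hab)
  have hlogA : 0 < log A := log_pos (by linarith)
  have hx : 0 ≤ (log A)⁻¹ * log (b / a) :=
    mul_nonneg (inv_pos.2 hlogA).le (log_nonneg ((one_le_div ha).2 hab))
  refine le_of_tendsto' (hasSum_integral_rpow_neg_half_mul_tsum hν h2 ha hab).tendsto_sum_nat
    fun n ↦ ?_
  have hcount := card_filter_lt_one_lt_le_of_lacunary (by linarith) hν h hsa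
    (sqrt_le_sqrt hab) (range n)
  rw [← sqrt_div' _ ha.le, log_sqrt (div_nonneg (ha.trans_le hab).le ha.le)] at hcount
  calc ∑ k ∈ range n, ν k * ∫ t in a..b, t ^ (-(1 : ℝ) / 2) * exp (-ν k ^ 2 * t)
      ≤ ∑ k ∈ range n, (2 * min (ν k * √b) (ν k * √b)⁻¹ + min (ν k * √a) (ν k * √a)⁻¹ +
          3 * if ν k * √a < 1 ∧ 1 < ν k * √b then 1 else 0) :=
        sum_le_sum fun k _ ↦ mul_integral_rpow_neg_half_mul_exp_le (hν k) ha hab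
    _ = 2 * ∑ k ∈ range n, min (ν k * √b) (ν k * √b)⁻¹ +
          ∑ k ∈ range n, min (ν k * √a) (ν k * √a)⁻¹ +
          3 * (#{k ∈ range n | ν k * √a < 1 ∧ 1 < ν k * √b} : ℝ) := by
        rw [sum_add_distrib, sum_add_distrib, ← mul_sum, ← mul_sum, sum_boole]
    _ ≤ 2 * 4 + 4 + 3 * (1 + log (b / a) / 2 / log A) := by
        gcongr
        · exact sum_range_min_inv_le_four_of_doubling (fun k ↦ mul_pos (hν k) hsb)
            (fun k ↦ by nlinarith [h2 k]) n
        · exact sum_range_min_inv_le_four_of_doubling (fun k ↦ mul_pos (hν k) hsa)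
            (fun k ↦ by nlinarith [h2 k]) n
    _ ≤ 15 * (1 + (log A)⁻¹ * log (b / a)) := by
        have : log (b / a) / 2 / log A = (log A)⁻¹ * log (b / a) / 2 := by ring
        linarith

lemma integral_sq_tsum_le (hν : ∀ k, 0 < ν k) (h2 : ∀ k, 2 * ν k ≤ ν (k + 1)) {a b : ℝ}
    (ha : 0 < a) (hab : a ≤ b) :
    ∫ t in a..b, (∑' k, ν k * exp (-ν k ^ 2 * t)) ^ 2 ≤
      8 * ∫ t in a..b, t ^ (-(1 : ℝ) / 2) * ∑' k, ν k * exp (-ν k ^ 2 * t) := by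
  have hcont : ContinuousOn (fun t ↦ ∑' k, ν k * exp (-ν k ^ 2 * t)) (uIcc a b) :=
    (continuousOn_tsum_mul_exp_neg_sq_mul hν h2 ha).mono
      (by rw [uIcc_of_le hab]; exact Icc_subset_Ici_self)
  rw [← intervalIntegral.integral_const_mul]
  refine integral_mono_on hab (hcont.pow 2).intervalIntegrable
    ((intervalIntegrable_rpow_neg_half_mul hcont).const_mul 8) fun t ht ↦ ?_
  have ht0 : 0 < t := ha.trans_le ht.1
  have hS : ∑' k, ν k * exp (-ν k ^ 2 * t) ≤ 8 * t ^ (-(1 : ℝ) / 2) := by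
    convert tsum_pow_mul_exp_neg_sq_mul_le hν h2 le_rfl ht0 using 2 <;> norm_num
  have hS0 : 0 ≤ ∑' k, ν k * exp (-ν k ^ 2 * t) :=
    tsum_nonneg fun k ↦ mul_nonneg (hν k).le (exp_pos _).le
  nlinarith

end Series

lemma le_mul_floor_rpow_sub_one {x γ : ℝ} (hx : 1 ≤ x) (hγ : 1 ≤ γ) :
    x ≤ x * ⌊x ^ (γ - 1)⌋₊ := by
  have : (1 : ℝ) ≤ ⌊x ^ (γ - 1)⌋₊ := by
    exact_mod_cast Nat.le_floor (by exact_mod_cast one_le_rpow hx (by linarith))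
  nlinarith

lemma mul_floor_rpow_sub_one_le {x γ : ℝ} (hx : 0 < x) : x * ⌊x ^ (γ - 1)⌋₊ ≤ x ^ γ := by
  calc x * ⌊x ^ (γ - 1)⌋₊ ≤ x * x ^ (γ - 1) :=
        mul_le_mul_of_nonneg_left (Nat.floor_le (rpow_nonneg hx.le _)) hx.le
    _ = x ^ γ := by conv_rhs => rw [← add_sub_cancel 1 γ, rpow_add hx, rpow_one]

lemma mul_rpow_rpow_add_one_le {A b γ : ℝ} (hA : 2 ≤ A) (hb : 10 ≤ b) (hγ₀ : 0 ≤ γ) (hγ : γ ≤ 8)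
    (k : ℕ) : A * (A ^ b ^ k) ^ γ + 1 ≤ A ^ b ^ (k + 1) := by
  have hbk : 1 ≤ b ^ k := one_le_pow₀ (by linarith)
  have hAe : 1 ≤ A ^ (γ * b ^ k) := one_le_rpow (by linarith) (by positivity)
  calc A * (A ^ b ^ k) ^ γ + 1 ≤ A ^ 2 * A ^ (γ * b ^ k) := by
        rw [← rpow_mul (by linarith), mul_comm (b ^ k)]
        have hAX : 2 ≤ A * A ^ (γ * b ^ k) := by nlinarith
        nlinarith [mul_nonneg (by linarith : (0 : ℝ) ≤ A * A ^ (γ * b ^ k))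
          (by linarith : (0 : ℝ) ≤ A - 2)]
    _ = A ^ (γ * b ^ k + 2) := by rw [rpow_add (by linarith), rpow_two]; ring
    _ ≤ A ^ b ^ (k + 1) := rpow_le_rpow_of_exponent_le (by linarith) (by rw [pow_succ]; nlinarith)

lemma lacunary_of_eq_floor {A b γ : ℝ} (hA : 2 ≤ A) (hb : 10 ≤ b) (hγ₁ : 1 ≤ γ) (hγ₂ : γ ≤ 8)
    {M N : ℕ → ℕ} (hM : ∀ k, M k = ⌊A ^ b ^ k⌋₊)
    (hN : ∀ k, N k = M k * ⌊(M k : ℝ) ^ (γ - 1)⌋₊) :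
    (∀ k, 1 ≤ (N k : ℝ)) ∧ ∀ k, A * N k ≤ N (k + 1) := by
  have hM_le : ∀ k, (M k : ℝ) ≤ A ^ b ^ k := fun k ↦ by
    rw [hM]; exact Nat.floor_le (rpow_nonneg (by linarith) _)
  have hM_gt : ∀ k, A ^ b ^ k - 1 < M k := fun k ↦ by rw [hM]; exact Nat.sub_one_lt_floor _
  have hM_one : ∀ k, 1 ≤ (M k : ℝ) := fun k ↦ by
    have : A ≤ A ^ b ^ k := by
      simpa using rpow_le_rpow_of_exponent_le (by linarith) (one_le_pow₀ (by linarith) : 1 ≤ b ^ k)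
    linarith [hM_gt k]
  have hN_eq : ∀ k, (N k : ℝ) = M k * ⌊(M k : ℝ) ^ (γ - 1)⌋₊ := fun k ↦ by rw [hN]; push_cast; rfl
  have hN_ge : ∀ k, (M k : ℝ) ≤ N k := fun k ↦ by
    rw [hN_eq]; exact le_mul_floor_rpow_sub_one (hM_one k) hγ₁
  refine ⟨fun k ↦ (hM_one k).trans (hN_ge k), fun k ↦ ?_⟩
  calc A * N k ≤ A * (A ^ b ^ k) ^ γ := by
        rw [hN_eq]
        gcongr
        exact (mul_floor_rpow_sub_one_le (by linarith [hM_one k])).trans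
          (rpow_le_rpow (by linarith [hM_one k]) (hM_le k) (by linarith))
    _ ≤ A ^ b ^ (k + 1) - 1 := by linarith [mul_rpow_rpow_add_one_le hA hb (by linarith) hγ₂ k]
    _ ≤ N (k + 1) := by linarith [hM_gt (k + 1), hN_ge (k + 1)]

theorem series_estimates (b γ : ℝ) (hb : 10 ≤ b) (hγ₁ : 1 < γ) (hγ₂ : γ < 2) (m : ℕ) :
    ∃ A₀ : ℝ, 2 ≤ A₀ ∧ ∃ Cm : ℝ, 0 < Cm ∧ ∃ C : ℝ, 0 < C ∧
      ∀ A : ℝ, A₀ ≤ A →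
        ∀ M N : ℕ → ℕ,
          (∀ k, M k = ⌊A ^ (b ^ k)⌋₊) →
          (∀ k, N k = M k * ⌊(M k : ℝ) ^ (γ - 1)⌋₊) →
          -- (i) pointwise-in-time bound for the heat-dominated series
          (∀ t : ℝ, 0 < t →
            ∑' k : ℕ, (N k : ℝ) ^ (1 + m) * Real.exp (-(N k : ℝ) ^ 2 * t) ≤
              Cm * t ^ (-((m : ℝ) + 1) / 2) * Real.exp (-(N 0 : ℝ) ^ 2 * t / Cm)) ∧
          -- (ii) L²-in-time and weighted L¹-in-time bounds
          (∀ t₁ t₂ : ℝ, 0 < t₁ → t₁ ≤ t₂ → t₂ ≤ 1 →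
            (∫ t in t₁..t₂,
                (∑' k : ℕ, (N k : ℝ) * Real.exp (-(N k : ℝ) ^ 2 * t)) ^ 2) +
              (∫ t in t₁..t₂,
                t ^ (-(1 : ℝ) / 2) *
                  ∑' k : ℕ, (N k : ℝ) * Real.exp (-(N k : ℝ) ^ 2 * t)) ≤
              C * (1 + (Real.log A)⁻¹ * Real.log (t₂ / t₁))) := by
  refine ⟨2, le_rfl, 4 * (1 + m + 1)! * 2 ^ (1 + m), by positivity, 135, by norm_num, ?_⟩
  intro A hA M N hM hN
  obtain ⟨hN1, hlac⟩ := lacunary_of_eq_floor hA hb hγ₁.le (by linarith) hM hN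
  have hν : ∀ k, 0 < (N k : ℝ) := fun k ↦ zero_lt_one.trans_le (hN1 k)
  have h2 := two_mul_le_of_lacunary (fun k ↦ (hν k).le) hA hlac
  refine ⟨fun t ht ↦ ?_, fun t₁ t₂ ht₁ h₁₂ _ ↦ ?_⟩
  · have := tsum_pow_mul_exp_neg_sq_mul_le_mul_exp hν h2 (Nat.le_add_right 1 m) ht
    rwa [show -((1 + m : ℕ) : ℝ) / 2 = -((m : ℝ) + 1) / 2 by push_cast; ring] at this
  · have := integral_rpow_neg_half_mul_tsum_le hν hA hlac ht₁ h₁₂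
    have := integral_sq_tsum_le hν h2 ht₁ h₁₂
    linarith
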